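/- arXiv:2302.02510 — 7 statements merged into one kernel-verified Lean document; each statement's English description precedes it below -/
import Mathlib

section
/- (Valuation formula) For every m ≥ 1 and all open subsets U, V of a finite abstract simplicial complex G, w_m(U ∪ V) + w_m(U ∩ V) = w_m(U) + w_m(V), where w_m(A) = Σ_{(x_1,...,x_m) ∈ A^m, x_1 ∩ ... ∩ x_m ∈ A} Π_j (-1)^{dim(x_j)}. -/
open Finset

variable {α : Type*} [DecidableEq α]

/-- The star `U(x) = {y ∈ G : x ⊆ y}` of a simplex `x` in the complex `G`. -/
def starC (G : Finset (Finset α)) (x : Finset α) : Finset (Finset α) :=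
  G.filter (fun y => x ⊆ y)

/-- The unit ball `B(x)`: the closure of the star `U(x)`. -/
def ballC (G : Finset (Finset α)) (x : Finset α) : Finset (Finset α) :=
  G.filter (fun z => ∃ y ∈ G, x ⊆ y ∧ z ⊆ y)

/-- The unit sphere `S(x) = B(x) \ U(x)`. -/
def sphereC (G : Finset (Finset α)) (x : Finset α) : Finset (Finset α) :=
  ballC G x \ starC G x

/-- `G` is a finite abstract simplicial complex: a finite set of nonempty finite sets
closed under taking nonempty subsets. -/
def IsComplex (G : Finset (Finset α)) : Prop :=
  (∀ x ∈ G, x.Nonempty) ∧ ∀ x ∈ G, ∀ y, y ⊆ x → y.Nonempty → y ∈ G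

/-- The intersection `x_1 ∩ ... ∩ x_m` of a tuple of finite sets (for `m ≥ 1`). -/
def interTuple {m : ℕ} (X : Fin m → Finset α) : Finset α :=
  (Finset.univ.sup X).filter (fun v => ∀ j, v ∈ X j)

/-- The `m`-th characteristic `w_m(A)`. -/
def wm (m : ℕ) (A : Finset (Finset α)) : ℤ :=
  ∑ X ∈ Fintype.piFinset (fun _ : Fin m => A),
    if interTuple X ∈ A then ∏ j, (-1 : ℤ) ^ ((X j).card - 1) else 0

/-- `U` is open in the star topology on `G`: a union of stars. -/
def SCOpen (G U : Finset (Finset α)) : Prop :=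
  ∃ T ⊆ G, U = T.biUnion (fun x => starC G x)


lemma scopen_subset {G U : Finset (Finset ℕ)} (h : SCOpen G U) : U ⊆ G := by
  obtain ⟨T, hT, rfl⟩ := h
  intro y hy
  simp only [Finset.mem_biUnion, starC, Finset.mem_filter] at hy
  obtain ⟨x, _, hy, _⟩ := hy
  exact hy

lemma scopen_up {G U : Finset (Finset ℕ)} (h : SCOpen G U) :
    ∀ x ∈ U, ∀ y ∈ G, x ⊆ y → y ∈ U := by
  obtain ⟨T, hT, rfl⟩ := h
  intro x hx y hyG hxy
  simp only [Finset.mem_biUnion, starC, Finset.mem_filter] at hx ⊢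
  obtain ⟨z, hz, _, hzx⟩ := hx
  exact ⟨z, hz, hyG, hzx.trans hxy⟩

lemma wm_eq {G U : Finset (Finset ℕ)} (hUG : U ⊆ G)
    (hup : ∀ x ∈ U, ∀ y ∈ G, x ⊆ y → y ∈ U) (m : ℕ) :
    wm m U = ∑ X ∈ Fintype.piFinset (fun _ : Fin m => G),
      if interTuple X ∈ U then ∏ j, (-1 : ℤ) ^ ((X j).card - 1) else 0 := by
  unfold wm
  apply Finset.sum_subset
  · intro X hX
    simp only [Fintype.mem_piFinset] at hX ⊢
    exact fun j => hUG (hX j)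
  · intro X hXG hXU
    simp only [Fintype.mem_piFinset] at hXG hXU
    push_neg at hXU
    obtain ⟨j, hj⟩ := hXU
    rw [if_neg]
    intro hI
    exact hj (hup _ hI _ (hXG j) (fun v hv => (Finset.mem_filter.mp hv).2 j))

/-- Valuation formula: for all `m ≥ 1` and all open sets `U, V` in the star topology,
`w_m(U ∪ V) + w_m(U ∩ V) = w_m(U) + w_m(V)`. -/
theorem valuation_formula (G : Finset (Finset ℕ)) (hG : IsComplex G)
    (m : ℕ) (hm : 1 ≤ m)
    (U V : Finset (Finset ℕ)) (hU : SCOpen G U) (hV : SCOpen G V) :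
    wm m (U ∪ V) + wm m (U ∩ V) = wm m U + wm m V := by
  have hUG := scopen_subset hU
  have hVG := scopen_subset hV
  have hUup := scopen_up hU
  have hVup := scopen_up hV
  rw [wm_eq hUG hUup, wm_eq hVG hVup,
    wm_eq (Finset.union_subset hUG hVG) (by
      intro x hx y hyG hxy
      rcases Finset.mem_union.mp hx with h | h
      · exact Finset.mem_union_left _ (hUup x h y hyG hxy)
      · exact Finset.mem_union_right _ (hVup x h y hyG hxy)),
    wm_eq ((Finset.inter_subset_left).trans hUG) (by
      intro x hx y hyG hxy
      rcases Finset.mem_inter.mp hx with ⟨h1, h2⟩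
      exact Finset.mem_inter.mpr ⟨hUup x h1 y hyG hxy, hVup x h2 y hyG hxy⟩)]
  rw [← Finset.sum_add_distrib, ← Finset.sum_add_distrib]
  apply Finset.sum_congr rfl
  intro X _
  by_cases h1 : interTuple X ∈ U <;> by_cases h2 : interTuple X ∈ V <;>
    simp [Finset.mem_union, Finset.mem_inter, h1, h2]
end

section
/- (Energy formula, k = 1) For every finite abstract simplicial complex G and every m ≥ 1, w_m(G) = Σ_{x ∈ G} (-1)^{dim(x)} w_m(U(x)). -/
open Finset

variable {α : Type*} [DecidableEq α]

lemma interTuple_subset {m : ℕ} (X : Fin m → Finset α) (j : Fin m) :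
    interTuple X ⊆ X j := fun v hv => by
  simp only [interTuple, mem_filter] at hv
  exact hv.2 j

lemma sum_pow_nonempty (y : Finset α) (hy : y.Nonempty) :
    ∑ x ∈ y.powerset.filter (fun x => x.Nonempty), (-1 : ℤ) ^ (x.card - 1) = 1 := by
  have hfe : y.powerset.filter (fun x => x.Nonempty) = y.powerset.erase ∅ := by
    ext x
    simp [Finset.nonempty_iff_ne_empty, and_comm]
  have h0 : ∑ x ∈ y.powerset, (-1 : ℤ) ^ x.card = 0 := by
    rw [Finset.sum_powerset_neg_one_pow_card]
    simp [Finset.nonempty_iff_ne_empty.mp hy]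
  have key : ∑ x ∈ y.powerset.filter (fun x => x.Nonempty), (-1 : ℤ) ^ (x.card - 1)
      = -∑ x ∈ y.powerset.filter (fun x => x.Nonempty), (-1 : ℤ) ^ x.card := by
    rw [← Finset.sum_neg_distrib]
    apply Finset.sum_congr rfl
    intro x hx
    simp only [mem_filter] at hx
    obtain ⟨k, hk⟩ := Nat.exists_eq_add_of_le (Nat.one_le_iff_ne_zero.mpr
      (Finset.card_ne_zero.mpr hx.2))
    rw [hk]
    simp [pow_succ, pow_add]
  rw [key, hfe, Finset.sum_erase_eq_sub (by simp), h0]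
  simp


/-- Energy formula for `k = 1` (Gauss-Bonnet type):
`w_m(G) = Σ_{x ∈ G} (-1)^{dim x} w_m(U(x))`. -/
theorem energy_formula_one_point (G : Finset (Finset ℕ)) (hG : IsComplex G)
    (m : ℕ) (hm : 1 ≤ m) :
    wm m G = ∑ x ∈ G, (-1 : ℤ) ^ (x.card - 1) * wm m (starC G x) := by
  classical
  -- Step 1: rewrite wm over the star as a sum over tuples in G^m
  have hstar : ∀ x ∈ G, wm m (starC G x) =
      ∑ X ∈ Fintype.piFinset (fun _ : Fin m => G),
        if interTuple X ∈ G ∧ x ⊆ interTuple X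
        then ∏ j, (-1 : ℤ) ^ ((X j).card - 1) else 0 := by
    intro x hx
    unfold wm
    have hsub : Fintype.piFinset (fun _ : Fin m => starC G x)
        ⊆ Fintype.piFinset (fun _ : Fin m => G) := by
      intro X hX
      rw [Fintype.mem_piFinset] at *
      intro j
      exact (mem_filter.mp (hX j)).1
    rw [← Finset.sum_subset hsub]
    · apply Finset.sum_congr rfl
      intro X _
      congr 1
      simp [starC]
    · intro X hXG hXs
      rw [if_neg]
      rintro ⟨hI, hxI⟩
      apply hXs
      rw [Fintype.mem_piFinset] at *
      intro j
      simp only [starC, mem_filter]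
      exact ⟨hXG j, hxI.trans (interTuple_subset X j)⟩
  -- Step 2: swap sums
  rw [Finset.sum_congr rfl (fun x hx => by rw [hstar x hx])]
  simp_rw [Finset.mul_sum]
  rw [Finset.sum_comm]
  -- Step 3: compute the inner sum for each fixed tuple X
  unfold wm
  apply Finset.sum_congr rfl
  intro X hX
  by_cases hI : interTuple X ∈ G
  · have hne : (interTuple X).Nonempty := hG.1 _ hI
    rw [if_pos hI]
    have : ∀ x ∈ G, (-1 : ℤ) ^ (x.card - 1) *
        (if interTuple X ∈ G ∧ x ⊆ interTuple X
         then ∏ j, (-1 : ℤ) ^ ((X j).card - 1) else 0)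
        = if x ⊆ interTuple X
          then (-1 : ℤ) ^ (x.card - 1) * ∏ j, (-1 : ℤ) ^ ((X j).card - 1) else 0 := by
      intro x _
      by_cases h : x ⊆ interTuple X <;> simp [h, hI]
    rw [Finset.sum_congr rfl this, Finset.sum_ite, Finset.sum_const_zero, add_zero,
      ← Finset.sum_mul]
    have hfil : G.filter (fun x => x ⊆ interTuple X)
        = (interTuple X).powerset.filter (fun x => x.Nonempty) := by
      ext x
      simp only [mem_filter, mem_powerset]
      constructor
      · rintro ⟨hxG, hxsub⟩
        exact ⟨hxsub, hG.1 _ hxG⟩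
      · rintro ⟨hxsub, hxne⟩
        exact ⟨hG.2 _ hI _ hxsub hxne, hxsub⟩
    rw [hfil, sum_pow_nonempty _ hne, one_mul]
  · rw [if_neg hI]
    symm
    apply Finset.sum_eq_zero
    intro x _
    simp [hI]
end

section
/- (Energy formula, k = 2) For every finite abstract simplicial complex G and every m ≥ 1, w_m(G) = Σ_{(x,y) ∈ G²} (-1)^{dim(x)} (-1)^{dim(y)} w_m(U(x) ∩ U(y)). -/
open Finset

variable {α : Type*} [DecidableEq α]

lemma euler_simplex {G : Finset (Finset α)} (hG : IsComplex G) {z : Finset α} (hz : z ∈ G) :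
    ∑ x ∈ G.filter (fun x => x ⊆ z), (-1 : ℤ) ^ (x.card - 1) = 1 := by
  classical
  have hset : G.filter (fun x => x ⊆ z) = z.powerset.filter (fun x => x.Nonempty) := by
    ext x
    simp only [Finset.mem_filter, Finset.mem_powerset]
    exact ⟨fun h => ⟨h.2, hG.1 x h.1⟩, fun h => ⟨hG.2 z hz x h.1 h.2, h.1⟩⟩
  rw [hset]
  have h0 : ∑ x ∈ z.powerset.filter (fun x => x.Nonempty), (-1 : ℤ) ^ x.card = -1 := by
    have hsplit := Finset.sum_filter_add_sum_filter_not z.powerset (fun x => x.Nonempty)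
      (fun x => (-1 : ℤ) ^ x.card)
    have hnot : z.powerset.filter (fun x => ¬x.Nonempty) = {∅} := by
      ext x
      simp [Finset.not_nonempty_iff_eq_empty]
      rintro rfl; exact Finset.empty_subset z
    rw [hnot] at hsplit
    simp only [Finset.sum_singleton, Finset.card_empty, pow_zero] at hsplit
    have hz0 := Finset.sum_powerset_neg_one_pow_card_of_nonempty (hG.1 z hz)
    linarith
  have hcong : ∑ x ∈ z.powerset.filter (fun x => x.Nonempty), (-1 : ℤ) ^ (x.card - 1)
      = ∑ x ∈ z.powerset.filter (fun x => x.Nonempty), -(-1 : ℤ) ^ x.card := by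
    refine Finset.sum_congr rfl fun x hx => ?_
    have hx1 : 1 ≤ x.card := Finset.card_pos.2 (Finset.mem_filter.1 hx).2
    have hxe : x.card = (x.card - 1) + 1 := by omega
    rw [hxe, pow_succ, Nat.add_sub_cancel]
    ring
  rw [hcong, Finset.sum_neg_distrib, h0]
  norm_num

/-- Energy formula for `k = 2`:
`w_m(G) = Σ_{(x,y) ∈ G²} (-1)^{dim x} (-1)^{dim y} w_m(U(x) ∩ U(y))`. -/
theorem energy_formula_two_point (G : Finset (Finset ℕ)) (hG : IsComplex G)
    (m : ℕ) (hm : 1 ≤ m) :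
    wm m G = ∑ x ∈ G, ∑ y ∈ G,
      (-1 : ℤ) ^ (x.card - 1) * (-1 : ℤ) ^ (y.card - 1) *
        wm m (starC G x ∩ starC G y) := by
  classical
  have key : ∀ x ∈ G, ∀ y ∈ G, wm m (starC G x ∩ starC G y)
      = ∑ X ∈ Fintype.piFinset (fun _ : Fin m => G),
          if interTuple X ∈ G ∧ x ⊆ interTuple X ∧ y ⊆ interTuple X
          then ∏ j, (-1 : ℤ) ^ ((X j).card - 1) else 0 := by
    intro x hx y hy
    set A := starC G x ∩ starC G y with hA
    have hmemA : ∀ w : Finset ℕ, w ∈ A ↔ w ∈ G ∧ x ⊆ w ∧ y ⊆ w := by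
      intro w
      simp only [hA, Finset.mem_inter, starC, Finset.mem_filter]
      tauto
    have hsub : Fintype.piFinset (fun _ : Fin m => A) ⊆ Fintype.piFinset (fun _ : Fin m => G) := by
      intro X hX
      rw [Fintype.mem_piFinset] at hX ⊢
      exact fun j => ((hmemA (X j)).1 (hX j)).1
    rw [wm]
    rw [Finset.sum_subset hsub]
    · refine Finset.sum_congr rfl fun X hX => ?_
      by_cases hc : interTuple X ∈ G ∧ x ⊆ interTuple X ∧ y ⊆ interTuple X
      · rw [if_pos ((hmemA _).2 hc), if_pos hc]
      · rw [if_neg (fun h => hc ((hmemA _).1 h)), if_neg hc]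
    · intro X hXG hXA
      have hnA : interTuple X ∉ A := by
        intro h
        obtain ⟨h1, h2, h3⟩ := (hmemA _).1 h
        apply hXA
        rw [Fintype.mem_piFinset] at hXG ⊢
        intro j
        exact (hmemA (X j)).2 ⟨hXG j, h2.trans (interTuple_subset X j),
          h3.trans (interTuple_subset X j)⟩
      rw [if_neg hnA]
  rw [Finset.sum_congr rfl (fun x hx => Finset.sum_congr rfl (fun y hy => by rw [key x hx y hy]))]
  simp only [Finset.mul_sum]
  rw [Finset.sum_congr rfl (fun x _ => Finset.sum_comm), Finset.sum_comm]
  rw [wm]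
  refine Finset.sum_congr rfl fun X hX => ?_
  set z := interTuple X with hz
  set p : ℤ := ∏ j, (-1 : ℤ) ^ ((X j).card - 1) with hp
  by_cases hzG : z ∈ G
  · rw [if_pos hzG]
    symm
    have hterm : ∀ x ∈ G, ∀ y ∈ G,
        (-1 : ℤ) ^ (x.card - 1) * (-1 : ℤ) ^ (y.card - 1) *
          (if z ∈ G ∧ x ⊆ z ∧ y ⊆ z then p else 0)
        = (if x ⊆ z then (-1 : ℤ) ^ (x.card - 1) else 0) *
          (if y ⊆ z then (-1 : ℤ) ^ (y.card - 1) * p else 0) := by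
      intro x _ y _
      by_cases hx : x ⊆ z <;> by_cases hy : y ⊆ z <;>
        simp [hx, hy, hzG, mul_assoc]
    rw [Finset.sum_congr rfl (fun x hx => Finset.sum_congr rfl (fun y hy => hterm x hx y hy))]
    have hsum1 : ∑ x ∈ G, (if x ⊆ z then (-1 : ℤ) ^ (x.card - 1) else 0) = 1 := by
      rw [← Finset.sum_filter]
      exact euler_simplex hG hzG
    have hsum2 : ∑ y ∈ G, (if y ⊆ z then (-1 : ℤ) ^ (y.card - 1) * p else 0) = p := by
      have : ∀ y : Finset ℕ, (if y ⊆ z then (-1 : ℤ) ^ (y.card - 1) * p else 0)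
          = (if y ⊆ z then (-1 : ℤ) ^ (y.card - 1) else 0) * p := by
        intro y; by_cases hy : y ⊆ z <;> simp [hy]
      simp only [this, ← Finset.sum_mul, hsum1, one_mul]
    calc ∑ x ∈ G, ∑ y ∈ G, (if x ⊆ z then (-1 : ℤ) ^ (x.card - 1) else 0) *
          (if y ⊆ z then (-1 : ℤ) ^ (y.card - 1) * p else 0)
        = (∑ x ∈ G, (if x ⊆ z then (-1 : ℤ) ^ (x.card - 1) else 0)) *
          (∑ y ∈ G, (if y ⊆ z then (-1 : ℤ) ^ (y.card - 1) * p else 0)) := by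
          rw [Finset.sum_mul_sum]
      _ = p := by rw [hsum1, hsum2, one_mul]
  · rw [if_neg hzG]
    refine (Finset.sum_eq_zero fun x _ => Finset.sum_eq_zero fun y _ => ?_).symm
    rw [if_neg (fun h => hzG h.1), mul_zero]
end

section
/- (Ball formula) For every finite abstract simplicial complex G and every m ≥ 1, w_m(G) = Σ_{x ∈ G} (-1)^{dim(x)} w_m(B(x)), where B(x) is the closure of the star U(x). -/
open Finset

variable {α : Type*} [DecidableEq α]

lemma cone_sum (K : Finset (Finset α)) (v : α)
    (hne : ∀ x ∈ K, x.Nonempty) (hv : {v} ∈ K)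
    (hup : ∀ x ∈ K, insert v x ∈ K)
    (hdown : ∀ x ∈ K, v ∈ x → x ≠ {v} → x.erase v ∈ K) :
    ∑ x ∈ K, (-1 : ℤ) ^ (x.card - 1) = 1 := by
  rw [← Finset.add_sum_erase K _ hv]
  have neg_pow : ∀ a b : ℕ, a = b + 1 → (-1 : ℤ) ^ a + (-1 : ℤ) ^ b = 0 := by
    intro a b h; subst h; rw [pow_succ]; ring
  have h0 : ∑ x ∈ K.erase {v}, (-1 : ℤ) ^ (x.card - 1) = 0 := by
    refine Finset.sum_involution (fun x _ => if v ∈ x then x.erase v else insert v x)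
      ?cancel ?ne ?mem ?inv
    case cancel =>
      intro x hx
      rcases Finset.mem_erase.mp hx with ⟨hxne, hxK⟩
      by_cases hvx : v ∈ x
      · simp only [if_pos hvx, Finset.card_erase_of_mem hvx]
        have hc : 2 ≤ x.card := by
          refine Finset.one_lt_card.mpr ?_
          obtain ⟨w, hw, hwv⟩ : ∃ w ∈ x, w ≠ v := by
            by_contra h
            push_neg at h
            exact hxne (Finset.eq_singleton_iff_unique_mem.mpr ⟨hvx, h⟩)
          exact ⟨w, hw, v, hvx, hwv⟩
        exact neg_pow _ _ (by omega)
      · simp only [if_neg hvx, Finset.card_insert_of_notMem hvx]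
        have hc : 1 ≤ x.card := Finset.card_pos.mpr (hne x hxK)
        rw [add_comm]
        exact neg_pow _ _ (by omega)
    case ne =>
      intro x hx _
      by_cases hvx : v ∈ x
      · simp only [if_pos hvx]
        intro h
        exact (h ▸ Finset.notMem_erase v x) hvx
      · simp only [if_neg hvx]
        intro h
        exact hvx (h ▸ Finset.mem_insert_self v x)
    case mem =>
      intro x hx
      rcases Finset.mem_erase.mp hx with ⟨hxne, hxK⟩
      by_cases hvx : v ∈ x
      · simp only [if_pos hvx]
        refine Finset.mem_erase.mpr ⟨?_, hdown x hxK hvx hxne⟩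
        intro h
        exact (h ▸ Finset.notMem_erase v x) (Finset.mem_singleton_self v)
      · simp only [if_neg hvx]
        refine Finset.mem_erase.mpr ⟨?_, hup x hxK⟩
        intro h
        obtain ⟨w, hw⟩ := hne x hxK
        have hws : w ∈ ({v} : Finset α) := h ▸ Finset.mem_insert_of_mem hw
        rw [Finset.mem_singleton] at hws
        exact hvx (hws ▸ hw)
    case inv =>
      intro x hx
      by_cases hvx : v ∈ x
      · simp [hvx, Finset.notMem_erase, Finset.insert_erase hvx]
      · simp [hvx, Finset.erase_insert hvx]
  rw [h0, Finset.card_singleton]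
  norm_num

/-- Ball formula: `w_m(G) = Σ_{x ∈ G} (-1)^{dim x} w_m(B(x))`, where `B(x)` is the
closure of the star `U(x)`. -/
theorem ball_formula (G : Finset (Finset ℕ)) (hG : IsComplex G)
    (m : ℕ) (hm : 1 ≤ m) :
    wm m G = ∑ x ∈ G, (-1 : ℤ) ^ (x.card - 1) * wm m (ballC G x) := by
  classical
  have hball_sub : ∀ x : Finset ℕ, ballC G x ⊆ G := fun x => Finset.filter_subset _ _
  set j0 : Fin m := ⟨0, hm⟩ with hj0
  -- Step 1: rewrite each `wm m (ballC G x)` as a sum over tuples in `G`.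
  have step1 : ∀ x : Finset ℕ,
      wm m (ballC G x) = ∑ X ∈ Fintype.piFinset (fun _ : Fin m => G),
        if (∀ j, X j ∈ ballC G x) ∧ interTuple X ∈ ballC G x
        then ∏ j, (-1 : ℤ) ^ ((X j).card - 1) else 0 := by
    intro x
    unfold wm
    rw [Finset.sum_congr rfl (fun X hX => ?_)]
    · apply Finset.sum_subset
      · intro X hX
        rw [Fintype.mem_piFinset] at hX ⊢
        exact fun j => hball_sub x (hX j)
      · intro X _ hX
        rw [if_neg]
        rintro ⟨h1', _⟩
        exact hX (Fintype.mem_piFinset.mpr h1')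
    · rw [Fintype.mem_piFinset] at hX
      by_cases h : interTuple X ∈ ballC G x
      · rw [if_pos h, if_pos ⟨hX, h⟩]
      · rw [if_neg h, if_neg (fun hc => h hc.2)]
  simp_rw [step1, Finset.mul_sum]
  rw [Finset.sum_comm]
  unfold wm
  apply Finset.sum_congr rfl
  intro X hX
  rw [Fintype.mem_piFinset] at hX
  simp_rw [mul_ite, mul_zero]
  rw [Finset.sum_ite, Finset.sum_const_zero, add_zero, ← Finset.sum_mul]
  by_cases hz : interTuple X ∈ G
  · -- the key case: the coefficient sum is 1
    rw [if_pos hz]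
    obtain ⟨v, hv⟩ := hG.1 _ hz
    have hzX : ∀ j, interTuple X ⊆ X j := by
      intro j w hw
      exact (Finset.mem_filter.mp hw).2 j
    have hsum : ∑ x ∈ Finset.filter
        (fun x => (∀ j, X j ∈ ballC G x) ∧ interTuple X ∈ ballC G x) G,
        (-1 : ℤ) ^ (x.card - 1) = 1 := by
      apply cone_sum _ v
      · intro x hx
        exact hG.1 x (Finset.mem_filter.mp hx).1
      · -- {v} is in the filtered set
        refine Finset.mem_filter.mpr ⟨?_, ?_, ?_⟩
        · exact hG.2 (X j0) (hX j0) {v}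
            (Finset.singleton_subset_iff.mpr (hzX j0 hv)) ⟨v, Finset.mem_singleton_self v⟩
        · intro j
          exact Finset.mem_filter.mpr ⟨hX j, X j, hX j,
            Finset.singleton_subset_iff.mpr (hzX j hv), subset_rfl⟩
        · exact Finset.mem_filter.mpr ⟨hz, X j0, hX j0,
            Finset.singleton_subset_iff.mpr (hzX j0 hv), hzX j0⟩
      · -- closed under inserting v
        intro x hx
        rcases Finset.mem_filter.mp hx with ⟨hxG, hP1, _⟩
        have hw : ∀ j, ∃ y ∈ G, insert v x ⊆ y ∧ X j ⊆ y := by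
          intro j
          obtain ⟨-, y, hyG, hxy, hXy⟩ := Finset.mem_filter.mp (hP1 j)
          exact ⟨y, hyG, Finset.insert_subset (hXy (hzX j hv)) hxy, hXy⟩
        obtain ⟨y0, hy0G, hxy0, hXy0⟩ := hw j0
        refine Finset.mem_filter.mpr ⟨hG.2 y0 hy0G _ hxy0 (Finset.insert_nonempty v x),
          fun j => ?_, ?_⟩
        · obtain ⟨y, hyG, hxy, hXy⟩ := hw j
          exact Finset.mem_filter.mpr ⟨hX j, y, hyG, hxy, hXy⟩
        · exact Finset.mem_filter.mpr ⟨hz, y0, hy0G, hxy0, (hzX j0).trans hXy0⟩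
      · -- closed under erasing v
        intro x hx hvx hxne
        rcases Finset.mem_filter.mp hx with ⟨hxG, hP1, _⟩
        have hex : (x.erase v).Nonempty := by
          obtain ⟨w, hw', hwv⟩ : ∃ w ∈ x, w ≠ v := by
            by_contra h
            push_neg at h
            exact hxne (Finset.eq_singleton_iff_unique_mem.mpr ⟨hvx, h⟩)
          exact ⟨w, Finset.mem_erase.mpr ⟨hwv, hw'⟩⟩
        refine Finset.mem_filter.mpr ⟨hG.2 x hxG _ (Finset.erase_subset v x) hex,
          fun j => ?_, ?_⟩
        · obtain ⟨hXjG, y, hyG, hxy, hXy⟩ := Finset.mem_filter.mp (hP1 j)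
          exact Finset.mem_filter.mpr ⟨hXjG, y, hyG, (Finset.erase_subset v x).trans hxy, hXy⟩
        · obtain ⟨-, y, hyG, hxy, hXy⟩ := Finset.mem_filter.mp (hP1 j0)
          exact Finset.mem_filter.mpr ⟨hz, y, hyG, (Finset.erase_subset v x).trans hxy,
            (hzX j0).trans hXy⟩
    rw [hsum, one_mul]
  · -- otherwise both sides vanish
    rw [if_neg hz]
    have : Finset.filter
        (fun x => (∀ j, X j ∈ ballC G x) ∧ interTuple X ∈ ballC G x) G = ∅ := by
      refine Finset.filter_eq_empty_iff.mpr ?_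
      intro x _ hP
      exact hz (hball_sub x hP.2)
    rw [this, Finset.sum_empty, zero_mul]
end

section
/- (Sphere formula, k = 1) For every finite abstract simplicial complex G and every m ≥ 1, Σ_{x ∈ G} (-1)^{dim(x)} w_m(S(x)) = 0. -/
open Finset

variable {α : Type*} [DecidableEq α]

lemma mem_sphereC {G : Finset (Finset α)} {x z : Finset α} :
    z ∈ sphereC G x ↔ z ∈ G ∧ (∃ w ∈ G, x ⊆ w ∧ z ⊆ w) ∧ ¬ x ⊆ z := by
  simp only [sphereC, ballC, starC, mem_sdiff, mem_filter]
  tauto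

lemma neg_one_pow_add_pow_succ (k : ℕ) : (-1 : ℤ) ^ k + (-1 : ℤ) ^ (k + 1) = 0 := by
  rw [pow_succ]; ring

/-- Key cancellation lemma: for a fixed tuple of simplices, the signed count of
simplices `x` whose sphere contains the tuple and its intersection vanishes. -/
lemma key_sum (G : Finset (Finset α)) (hG : IsComplex G) {m : ℕ} (hm : 1 ≤ m)
    (X : Fin m → Finset α) :
    ∑ x ∈ G, (if (∀ j, X j ∈ sphereC G x) ∧ interTuple X ∈ sphereC G x
      then (-1 : ℤ) ^ (x.card - 1) else 0) = 0 := by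
  by_cases hy : interTuple X ∈ G
  · have j0 : Fin m := ⟨0, hm⟩
    have hcond : ∀ x : Finset α,
        ((∀ j, X j ∈ sphereC G x) ∧ interTuple X ∈ sphereC G x)
        ↔ (∀ j, X j ∈ sphereC G x) := by
      intro x
      constructor
      · exact fun h => h.1
      · intro h
        refine ⟨h, ?_⟩
        obtain ⟨_, ⟨w, hw, hxw, hzw⟩, hns⟩ := mem_sphereC.mp (h j0)
        exact mem_sphereC.mpr ⟨hy, ⟨w, hw, hxw, (interTuple_subset X j0).trans hzw⟩,
          fun hxy => hns (hxy.trans (interTuple_subset X j0))⟩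
    simp only [hcond]
    rw [← Finset.sum_filter]
    obtain ⟨v, hv⟩ := hG.1 _ hy
    have hvX : ∀ j, v ∈ X j := (mem_filter.mp hv).2
    -- facts extracted from filter membership
    have hfact : ∀ a ∈ G.filter (fun x => ∀ j, X j ∈ sphereC G x),
        a ∈ G ∧ (∀ j, ∃ w ∈ G, a ⊆ w ∧ X j ⊆ w) ∧ (∀ j, ¬ a ⊆ X j) := by
      intro a ha
      obtain ⟨haG, hp⟩ := mem_filter.mp ha
      exact ⟨haG, fun j => (mem_sphereC.mp (hp j)).2.1, fun j => (mem_sphereC.mp (hp j)).2.2⟩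
    -- the involution: toggle v
    refine Finset.sum_involution
      (fun a _ => if v ∈ a then a.erase v else insert v a) ?hsum ?hne ?hmem ?hinv
    case hsum =>
      intro a ha
      obtain ⟨haG, _, hnsub⟩ := hfact a ha
      by_cases hva : v ∈ a
      · simp only [hva, if_pos]
        have h2 : 2 ≤ a.card := by
          by_contra h
          push_neg at h
          interval_cases h' : a.card
          · exact absurd (Finset.card_eq_zero.mp h') (Finset.nonempty_iff_ne_empty.mp (hG.1 a haG))
          · obtain ⟨u, hu⟩ := Finset.card_eq_one.mp h'
            rw [hu] at hva
            exact hnsub j0 (by rw [hu]; simp [Finset.mem_singleton.mp hva ▸ hvX j0])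
        rw [Finset.card_erase_of_mem hva,
          show a.card - 1 - 1 = a.card - 2 from by omega,
          show a.card - 1 = (a.card - 2) + 1 from by omega, add_comm]
        exact neg_one_pow_add_pow_succ _
      · simp only [hva, if_neg, not_false_iff]
        rw [Finset.card_insert_of_notMem hva]
        have e1 : a.card + 1 - 1 = (a.card - 1) + 1 := by
          have : 1 ≤ a.card := Finset.card_pos.mpr (hG.1 a haG)
          omega
        rw [e1]
        exact neg_one_pow_add_pow_succ _
    case hne =>
      intro a ha _
      by_cases hva : v ∈ a
      · simp only [hva, if_pos]
        intro h
        have hc := congrArg Finset.card h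
        rw [Finset.card_erase_of_mem hva] at hc
        have h1 : 0 < a.card := Finset.card_pos.mpr ⟨v, hva⟩
        omega
      · simp only [hva, if_neg, not_false_iff]
        intro h
        have hc := congrArg Finset.card h
        rw [Finset.card_insert_of_notMem hva] at hc
        omega
    case hmem =>
      intro a ha
      obtain ⟨haG, hcof, hnsub⟩ := hfact a ha
      by_cases hva : v ∈ a
      · simp only [hva, if_pos]
        have hne : (a.erase v).Nonempty := by
          rw [← Finset.card_pos, Finset.card_erase_of_mem hva]
          have h2 : 2 ≤ a.card := by
            by_contra h
            push_neg at h
            interval_cases h' : a.card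
            · exact absurd (Finset.card_eq_zero.mp h')
                (Finset.nonempty_iff_ne_empty.mp (hG.1 a haG))
            · obtain ⟨u, hu⟩ := Finset.card_eq_one.mp h'
              rw [hu] at hva
              exact hnsub j0 (by rw [hu]; simp [Finset.mem_singleton.mp hva ▸ hvX j0])
          omega
        refine mem_filter.mpr ⟨hG.2 a haG _ (Finset.erase_subset v a) hne, fun j => ?_⟩
        obtain ⟨w, hw, haw, hXw⟩ := hcof j
        refine mem_sphereC.mpr ⟨(mem_sphereC.mp ((mem_filter.mp ha).2 j)).1,
          ⟨w, hw, (Finset.erase_subset v a).trans haw, hXw⟩, fun hsub => ?_⟩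
        refine hnsub j (fun u hu => ?_)
        by_cases huv : u = v
        · exact huv ▸ hvX j
        · exact hsub (Finset.mem_erase.mpr ⟨huv, hu⟩)
      · simp only [hva, if_neg, not_false_iff]
        obtain ⟨w0, hw0, haw0, hXw0⟩ := hcof j0
        have hins : insert v a ⊆ w0 :=
          Finset.insert_subset (hXw0 (hvX j0)) haw0
        refine mem_filter.mpr ⟨hG.2 w0 hw0 _ hins (Finset.insert_nonempty v a), fun j => ?_⟩
        obtain ⟨w, hw, haw, hXw⟩ := hcof j
        refine mem_sphereC.mpr ⟨(mem_sphereC.mp ((mem_filter.mp ha).2 j)).1,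
          ⟨w, hw, Finset.insert_subset (hXw (hvX j)) haw, hXw⟩, fun hsub => ?_⟩
        exact hnsub j ((Finset.subset_insert v a).trans hsub)
    case hinv =>
      intro a ha
      by_cases hva : v ∈ a
      · simp [hva, Finset.notMem_erase, Finset.insert_erase]
      · simp [hva, Finset.mem_insert_self, Finset.erase_insert]
  · refine Finset.sum_eq_zero fun x _ => ?_
    rw [if_neg]
    rintro ⟨-, hyS⟩
    exact hy (mem_sphereC.mp hyS).1

lemma wm_eq_big {G A : Finset (Finset α)} (hA : A ⊆ G) (m : ℕ) :
    wm m A = ∑ X ∈ Fintype.piFinset (fun _ : Fin m => G),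
      if (∀ j, X j ∈ A) ∧ interTuple X ∈ A
        then ∏ j, (-1 : ℤ) ^ ((X j).card - 1) else 0 := by
  have hzero : ∀ X ∈ Fintype.piFinset (fun _ : Fin m => G),
      X ∉ Fintype.piFinset (fun _ : Fin m => A) →
      (if (∀ j, X j ∈ A) ∧ interTuple X ∈ A
        then ∏ j, (-1 : ℤ) ^ ((X j).card - 1) else 0) = 0 := by
    intro X _ hXA
    rw [if_neg]
    rintro ⟨hall, -⟩
    exact hXA (Fintype.mem_piFinset.mpr hall)
  rw [wm, ← Finset.sum_subset (Fintype.piFinset_subset _ _ (fun _ => hA)) hzero]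
  refine Finset.sum_congr rfl fun X hX => ?_
  have hXA : ∀ j, X j ∈ A := Fintype.mem_piFinset.mp hX
  by_cases h : interTuple X ∈ A
  · rw [if_pos h, if_pos ⟨hXA, h⟩]
  · rw [if_neg h, if_neg (fun hc => h hc.2)]

/-- Sphere formula (`k = 1`): `Σ_{x ∈ G} (-1)^{dim x} w_m(S(x)) = 0`. -/
theorem sphere_formula (G : Finset (Finset ℕ)) (hG : IsComplex G)
    (m : ℕ) (hm : 1 ≤ m) :
    ∑ x ∈ G, (-1 : ℤ) ^ (x.card - 1) * wm m (sphereC G x) = 0 := by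
  have hsub : ∀ x, sphereC G x ⊆ G := fun x z hz => (mem_sphereC.mp hz).1
  have step1 : ∑ x ∈ G, (-1 : ℤ) ^ (x.card - 1) * wm m (sphereC G x)
      = ∑ x ∈ G, ∑ X ∈ Fintype.piFinset (fun _ : Fin m => G),
          (if (∀ j, X j ∈ sphereC G x) ∧ interTuple X ∈ sphereC G x
            then (-1 : ℤ) ^ (x.card - 1) else 0) * ∏ j, (-1 : ℤ) ^ ((X j).card - 1) := by
    refine Finset.sum_congr rfl fun x _ => ?_
    rw [wm_eq_big (hsub x), Finset.mul_sum]
    refine Finset.sum_congr rfl fun X _ => ?_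
    rw [ite_mul, zero_mul, mul_ite, mul_zero]
  rw [step1, Finset.sum_comm]
  refine Finset.sum_eq_zero fun X _ => ?_
  rw [← Finset.sum_mul, key_sum G hG hm X, zero_mul]
end

section
/- (Euler sphere formula) For every finite abstract simplicial complex G, Σ_{x ∈ G} (-1)^{dim(x)} χ(S(x)) = 0, where χ(A) = Σ_{y ∈ A} (-1)^{dim(y)} is the Euler characteristic. -/
open Finset

variable {α : Type*} [DecidableEq α]

lemma pair_sum {k : ℕ} (hk : 1 ≤ k) : (-1 : ℤ) ^ (k - 1) + (-1 : ℤ) ^ k = 0 := by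
  obtain ⟨n, rfl⟩ := Nat.exists_eq_add_of_le hk
  simp [pow_succ, add_comm 1 n]

lemma ball_sum (G : Finset (Finset ℕ)) (hG : IsComplex G) {x : Finset ℕ} (hx : x ∈ G) :
    ∑ z ∈ ballC G x, (-1 : ℤ) ^ (z.card - 1) = 1 := by
  obtain ⟨v, hv⟩ := hG.1 x hx
  have hvG : ({v} : Finset ℕ) ∈ G :=
    hG.2 x hx {v} (by simpa using hv) (singleton_nonempty v)
  have hvB : ({v} : Finset ℕ) ∈ ballC G x := by
    simp only [ballC, mem_filter]
    exact ⟨hvG, x, hx, Finset.Subset.rfl, by simpa using hv⟩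
  rw [← Finset.add_sum_erase _ _ hvB]
  have hcard2 : ∀ z ∈ G, z ≠ {v} → v ∈ z → 2 ≤ z.card := by
    intro z hzG hzne hvz
    by_contra h
    push_neg at h
    have h1 : z.card = 1 := by
      have := Finset.card_pos.mpr (hG.1 z hzG)
      omega
    rw [Finset.card_eq_one] at h1
    obtain ⟨a, rfl⟩ := h1
    simp only [Finset.mem_singleton] at hvz
    exact hzne (by rw [hvz])
  have h0 : ∑ z ∈ (ballC G x).erase {v}, (-1 : ℤ) ^ (z.card - 1) = 0 := by
    refine Finset.sum_involution (fun z _ => if v ∈ z then z.erase v else insert v z)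
      ?h1 ?h3 ?hmem ?h4
    case h1 =>
      intro z hz
      have hzB := Finset.mem_of_mem_erase hz
      have hzne : z ≠ {v} := Finset.ne_of_mem_erase hz
      simp only [ballC, mem_filter] at hzB
      obtain ⟨hzG, y, hyG, hxy, hzy⟩ := hzB
      have hznon := hG.1 z hzG
      by_cases hvz : v ∈ z
      · simp only [hvz, if_true, Finset.card_erase_of_mem hvz]
        have h2 := hcard2 z hzG hzne hvz
        have hk : 1 ≤ z.card - 1 := by omega
        linear_combination pair_sum hk
      · simp only [hvz, if_false, Finset.card_insert_of_notMem hvz]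
        have hk : 1 ≤ z.card := Finset.card_pos.mpr hznon
        have := pair_sum hk
        simpa [Nat.add_sub_cancel] using this
    case h3 =>
      intro z hz _
      by_cases hvz : v ∈ z
      · simp only [hvz, if_true]
        intro h
        have hne := Finset.notMem_erase v z
        rw [h] at hne
        exact hne hvz
      · simp only [hvz, if_false]
        intro h
        have hm := Finset.mem_insert_self v z
        rw [h] at hm
        exact hvz hm
    case hmem =>
      intro z hz
      have hzB := Finset.mem_of_mem_erase hz
      have hzne : z ≠ {v} := Finset.ne_of_mem_erase hz
      simp only [ballC, mem_filter] at hzB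
      obtain ⟨hzG, y, hyG, hxy, hzy⟩ := hzB
      by_cases hvz : v ∈ z
      · simp only [hvz, if_true]
        have hsub : z.erase v ⊆ z := Finset.erase_subset v z
        have hnon : (z.erase v).Nonempty := by
          have h2 := hcard2 z hzG hzne hvz
          have : 0 < (z.erase v).card := by
            rw [Finset.card_erase_of_mem hvz]; omega
          exact Finset.card_pos.mp this
        refine Finset.mem_erase.mpr ⟨?_, ?_⟩
        · intro h
          have : v ∈ z.erase v := h ▸ Finset.mem_singleton_self v
          exact Finset.notMem_erase v z this
        · simp only [ballC, mem_filter]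
          exact ⟨hG.2 z hzG _ hsub hnon, y, hyG, hxy, hsub.trans hzy⟩
      · simp only [hvz, if_false]
        have hvy : v ∈ y := hxy hv
        have hsub : insert v z ⊆ y := Finset.insert_subset hvy hzy
        refine Finset.mem_erase.mpr ⟨?_, ?_⟩
        · intro h
          have hz1 : z ⊆ ({v} : Finset ℕ) := h ▸ Finset.subset_insert v z
          obtain ⟨w, hw⟩ := hG.1 z hzG
          have : w = v := Finset.mem_singleton.mp (hz1 hw)
          exact hvz (this ▸ hw)
        · simp only [ballC, mem_filter]
          exact ⟨hG.2 y hyG _ hsub ⟨v, Finset.mem_insert_self v z⟩, y, hyG, hxy, hsub⟩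
    case h4 =>
      intro z hz
      by_cases hvz : v ∈ z
      · simp [hvz, Finset.insert_erase hvz]
      · simp [hvz, Finset.erase_insert hvz]
  rw [h0]
  simp

lemma star_sub_sum (G : Finset (Finset ℕ)) (hG : IsComplex G) {y : Finset ℕ} (hy : y ∈ G) :
    ∑ x ∈ G.filter (· ⊆ y), (-1 : ℤ) ^ (x.card - 1) = 1 := by
  have hset : G.filter (· ⊆ y) = y.powerset.erase ∅ := by
    ext z
    simp only [mem_filter, Finset.mem_erase, Finset.mem_powerset]
    constructor
    · rintro ⟨hzG, hzy⟩
      exact ⟨(hG.1 z hzG).ne_empty, hzy⟩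
    · rintro ⟨hne, hzy⟩
      exact ⟨hG.2 y hy z hzy (Finset.nonempty_of_ne_empty hne), hzy⟩
  rw [hset]
  have hp : (∅ : Finset ℕ) ∈ y.powerset := Finset.empty_mem_powerset y
  have h1 := Finset.add_sum_erase y.powerset (fun m => (-1 : ℤ) ^ m.card) hp
  rw [Finset.sum_powerset_neg_one_pow_card_of_nonempty (hG.1 y hy)] at h1
  have h2 : ∑ m ∈ y.powerset.erase ∅, (-1 : ℤ) ^ m.card = -1 := by
    simpa using h1
  have h3 : ∀ m ∈ y.powerset.erase ∅, (-1 : ℤ) ^ (m.card - 1) = -(-1 : ℤ) ^ m.card := by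
    intro m hm
    have hne : m ≠ ∅ := Finset.ne_of_mem_erase hm
    have hk : 1 ≤ m.card := Finset.card_pos.mpr (Finset.nonempty_of_ne_empty hne)
    linear_combination pair_sum hk
  rw [Finset.sum_congr rfl h3, Finset.sum_neg_distrib, h2]
  ring

/-- Euler sphere formula: `Σ_{x ∈ G} (-1)^{dim x} χ(S(x)) = 0`, where
`χ(A) = Σ_{y ∈ A} (-1)^{dim y}` is the Euler characteristic. -/
theorem euler_sphere_formula (G : Finset (Finset ℕ)) (hG : IsComplex G) :
    ∑ x ∈ G, (-1 : ℤ) ^ (x.card - 1) *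
      (∑ y ∈ sphereC G x, (-1 : ℤ) ^ (y.card - 1)) = 0 := by
  have hsub : ∀ x ∈ G, starC G x ⊆ ballC G x := by
    intro x hx y hy
    simp only [starC, mem_filter] at hy
    simp only [ballC, mem_filter]
    exact ⟨hy.1, y, hy.1, hy.2, Finset.Subset.rfl⟩
  have hinner : ∀ x ∈ G, ∑ y ∈ sphereC G x, (-1 : ℤ) ^ (y.card - 1)
      = 1 - ∑ y ∈ starC G x, (-1 : ℤ) ^ (y.card - 1) := by
    intro x hx
    rw [sphereC, Finset.sum_sdiff_eq_sub (hsub x hx), ball_sum G hG hx]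
  rw [Finset.sum_congr rfl (fun x hx => by rw [hinner x hx])]
  have key : ∑ x ∈ G, (-1 : ℤ) ^ (x.card - 1) * ∑ y ∈ starC G x, (-1 : ℤ) ^ (y.card - 1)
      = ∑ x ∈ G, (-1 : ℤ) ^ (x.card - 1) := by
    calc ∑ x ∈ G, (-1 : ℤ) ^ (x.card - 1) * ∑ y ∈ starC G x, (-1 : ℤ) ^ (y.card - 1)
        = ∑ x ∈ G, ∑ y ∈ G,
            if x ⊆ y then (-1 : ℤ) ^ (x.card - 1) * (-1 : ℤ) ^ (y.card - 1) else 0 := by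
          refine Finset.sum_congr rfl fun x _ => ?_
          rw [Finset.mul_sum, starC, Finset.sum_filter]
      _ = ∑ y ∈ G, ∑ x ∈ G,
            if x ⊆ y then (-1 : ℤ) ^ (x.card - 1) * (-1 : ℤ) ^ (y.card - 1) else 0 :=
          Finset.sum_comm
      _ = ∑ y ∈ G, (-1 : ℤ) ^ (y.card - 1) * ∑ x ∈ G.filter (· ⊆ y), (-1 : ℤ) ^ (x.card - 1) := by
          refine Finset.sum_congr rfl fun y _ => ?_
          rw [Finset.mul_sum, Finset.sum_filter]
          refine Finset.sum_congr rfl fun x _ => ?_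
          split <;> ring
      _ = ∑ y ∈ G, (-1 : ℤ) ^ (y.card - 1) := by
          refine Finset.sum_congr rfl fun y hy => ?_
          rw [star_sub_sum G hG hy, mul_one]
  simp_rw [mul_sub, mul_one, Finset.sum_sub_distrib, key, sub_self]
end

section
/- (Product formula) For finite abstract simplicial complexes G and H, and every m ≥ 1, w_m(G · H) = w_m(G) · w_m(H), where G · H is the topological (Stanley-Reisner) product. -/
open Finset

variable {α : Type*} [DecidableEq α]

/-- The topological (Stanley-Reisner) product `G · H`: the order complex of the
product poset, i.e. all nonempty sets of pairs `(a,b) ∈ G × H` that are pairwise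
comparable in the product (inclusion) order. -/
def prodComplex (G H : Finset (Finset ℕ)) : Finset (Finset (Finset ℕ × Finset ℕ)) :=
  (G ×ˢ H).powerset.filter (fun s => s.Nonempty ∧
    ∀ p ∈ s, ∀ q ∈ s, (p.1 ⊆ q.1 ∧ p.2 ⊆ q.2) ∨ (q.1 ⊆ p.1 ∧ q.2 ⊆ p.2))

/-!
Expanding the indicator of `x₁ ∩ ⋯ ∩ xₘ ∈ A` by inclusion–exclusion over the simplices inside the
intersection gives `w_m(A) = ∑_{x ∈ A} ω(x) χ(U(x))^m`, where `ω(x) = (-1)^dim x` and `U(x)` is the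
star of `x`. A simplex of `G · H` is a chain `c` in `G × H`; group the chains by their top element
`q = (a, b)`. The chains with top `q` have total sign `ω(a) ω(b)`, and `χ(U(c)) = χ(U(a)) χ(U(b))`,
so the sum over `G · H` factors into the two sums for `G` and `H`.

Both facts are computations of signed chain counts `∑ (-1)^#e` over chains `e` (that is, of Möbius
functions, by Philip Hall's theorem). The link of `c = {c₁ < ⋯ < c_k = q}` is the ordinal sum of the
part of `G × H` below `c₁`, the open intervals `(cᵢ, cᵢ₊₁)` and the part of `G × H` above `q`.
Signed chain counts multiply over ordinal sums, and in a product of Boolean lattices they are `±1`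
on the first two kinds of pieces, so up to sign only the part above `q` remains; its count is the
product of the star sums of `a` and `b`.
-/

section StarFormula

def eulerChar (A : Finset (Finset α)) : ℤ :=
  ∑ x ∈ A, (-1) ^ (#x - 1)

theorem neg_one_pow_card_sub_one {σ : Type*} {x : Finset σ} (hx : x.Nonempty) :
    (-1 : ℤ) ^ (#x - 1) = -(-1) ^ #x := by
  rw [← Nat.sub_add_cancel (card_pos.2 hx), Nat.add_sub_cancel, pow_succ, mul_neg_one, neg_neg]

theorem sum_powerset_filter_nonempty_neg_one_pow_card {s : Finset α} (hs : s.Nonempty) :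
    ∑ x ∈ s.powerset with x.Nonempty, (-1 : ℤ) ^ #x = -1 := by
  rw [filter_congr fun x _ => nonempty_iff_ne_empty, filter_ne',
    sum_erase_eq_sub (empty_mem_powerset s), sum_powerset_neg_one_pow_card_of_nonempty hs]
  simp

theorem IsComplex.eulerChar_starC_eq_neg_sum {A : Finset (Finset α)} (hA : IsComplex A)
    (x : Finset α) :
    eulerChar (starC A x) = -∑ y ∈ starC A x, (-1 : ℤ) ^ #y := by
  rw [eulerChar, ← sum_neg_distrib]
  exact sum_congr rfl fun y hy => neg_one_pow_card_sub_one (hA.1 y (mem_filter.1 hy).1)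

theorem subset_interTuple_iff {m : ℕ} (j₀ : Fin m) {X : Fin m → Finset α} {T : Finset α} :
    T ⊆ interTuple X ↔ ∀ j, T ⊆ X j := by
  simp only [interTuple, subset_iff, mem_filter]
  exact ⟨fun h j v hv => (h hv).2 j,
    fun h v hv => ⟨mem_sup.2 ⟨j₀, mem_univ _, h j₀ hv⟩, fun j => h j hv⟩⟩

theorem wm_eq_sum_eulerChar_starC {A : Finset (Finset α)} (hA : IsComplex A) {m : ℕ}
    (hm : 1 ≤ m) : wm m A = ∑ x ∈ A, (-1) ^ (#x - 1) * eulerChar (starC A x) ^ m := by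
  have j₀ : Fin m := ⟨0, hm⟩
  have hindicator : ∀ X ∈ Fintype.piFinset fun _ : Fin m => A,
      (if interTuple X ∈ A then 1 else 0 : ℤ) = ∑ T ∈ A with ∀ j, T ⊆ X j, (-1) ^ (#T - 1) := by
    intro X hX
    have hXA : X j₀ ∈ A := Fintype.mem_piFinset.1 hX j₀
    have hinter : interTuple X ⊆ X j₀ := (subset_interTuple_iff j₀).1 subset_rfl j₀
    have hsub : {T ∈ A | ∀ j, T ⊆ X j} = {T ∈ (interTuple X).powerset | T.Nonempty} := by
      ext T
      simp only [mem_filter, mem_powerset, ← subset_interTuple_iff j₀]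
      exact ⟨fun h => ⟨h.2, hA.1 T h.1⟩, fun h => ⟨hA.2 _ hXA T (h.1.trans hinter) h.2, h.1⟩⟩
    rw [hsub, sum_congr rfl fun T hT => neg_one_pow_card_sub_one (mem_filter.1 hT).2,
      sum_neg_distrib]
    rcases (interTuple X).eq_empty_or_nonempty with h | h
    · rw [if_neg fun h' => (hA.1 _ h').ne_empty h, h, powerset_empty, filter_singleton]
      simp
    · rw [if_pos (hA.2 _ hXA _ hinter h), sum_powerset_filter_nonempty_neg_one_pow_card h, neg_neg]
  have hstar : ∀ T : Finset α, {X ∈ Fintype.piFinset fun _ : Fin m => A | ∀ j, T ⊆ X j} =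
      Fintype.piFinset fun _ => starC A T := by
    intro T
    ext X
    simp [starC, Fintype.mem_piFinset, forall_and]
  calc wm m A
      = ∑ X ∈ Fintype.piFinset (fun _ : Fin m => A), ∑ T ∈ A,
          if ∀ j, T ⊆ X j then (-1) ^ (#T - 1) * ∏ j, (-1) ^ (#(X j) - 1) else 0 := by
        refine sum_congr rfl fun X hX => ?_
        rw [← sum_filter, ← sum_mul, ← hindicator X hX, boole_mul]
    _ = ∑ T ∈ A, (-1) ^ (#T - 1) * ∑ X ∈ Fintype.piFinset (fun _ : Fin m => starC A T),
          ∏ j, (-1 : ℤ) ^ (#(X j) - 1) := by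
        rw [sum_comm]
        refine sum_congr rfl fun T _ => ?_
        rw [← sum_filter, hstar, mul_sum]
    _ = ∑ x ∈ A, (-1) ^ (#x - 1) * eulerChar (starC A x) ^ m := by
        refine sum_congr rfl fun x _ => ?_
        rw [← prod_univ_sum (fun _ => starC A x) fun _ y => (-1 : ℤ) ^ (#y - 1), prod_const,
          card_univ, Fintype.card_fin, eulerChar]

end StarFormula

section ChainSum

open Classical

variable {ι : Type*} [PartialOrder ι]

noncomputable def chains (R : Finset ι) : Finset (Finset ι) :=
  R.powerset.filter fun e : Finset ι => IsChain (· ≤ ·) (e : Set ι)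

theorem mem_chains {R e : Finset ι} : e ∈ chains R ↔ e ⊆ R ∧ IsChain (· ≤ ·) (e : Set ι) := by
  rw [chains, mem_filter, mem_powerset]

/-- Minus the reduced Euler characteristic of the order complex of `R`. -/
noncomputable def signedChainCount (R : Finset ι) : ℤ :=
  ∑ e ∈ chains R, (-1) ^ #e

theorem mem_chains_filter_lt {R e : Finset ι} {q : ι} :
    e ∈ chains {x ∈ R | x < q} ↔ e ∈ chains R ∧ ∀ y ∈ e, y < q := by
  simp only [mem_chains, subset_iff, mem_filter]
  grind

theorem filter_lt_filter_lt_of_lt {R : Finset ι} {a q : ι} (h : a < q) :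
    {x ∈ {x ∈ R | x < q} | x < a} = {x ∈ R | x < a} := by
  rw [filter_filter]
  exact filter_congr fun x _ => ⟨fun hx => hx.2, fun hx => ⟨hx.trans h, hx⟩⟩

variable [DecidableEq ι]

noncomputable def orderLink (R c : Finset ι) : Finset ι :=
  {x ∈ R | x ∉ c ∧ ∀ y ∈ c, x ≤ y ∨ y ≤ x}

theorem IsChain.exists_forall_erase_lt {e : Finset ι} (he : IsChain (· ≤ ·) (e : Set ι))
    (hne : e.Nonempty) : ∃ z ∈ e, ∀ y ∈ e.erase z, y < z := by
  obtain ⟨z, hz⟩ := e.exists_maximal hne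
  refine ⟨z, hz.1, fun y hy => ?_⟩
  obtain ⟨hyz, hy⟩ := mem_erase.1 hy
  exact lt_of_le_of_ne ((he.total hy hz.1).elim id (hz.2 hy)) hyz

theorem IsChain.finset_induction_on_max {p : Finset ι → Prop} (s : Finset ι)
    (hs : IsChain (· ≤ ·) (s : Set ι)) (empty : p ∅)
    (insert : ∀ a (s : Finset ι), IsChain (· ≤ ·) (s : Set ι) → (∀ x ∈ s, x < a) → p s →
      p (insert a s)) :
    p s := by
  induction s using Finset.strongInduction with
  | H s ih =>
    rcases s.eq_empty_or_nonempty with rfl | hne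
    · exact empty
    obtain ⟨z, hz, hlt⟩ := hs.exists_forall_erase_lt hne
    have hchain : IsChain (· ≤ ·) (s.erase z : Set ι) := hs.mono (by simp)
    rw [← insert_erase hz]
    exact insert z _ hchain hlt (ih _ (erase_ssubset hz) hchain)

theorem IsChain.insert_of_forall_lt {e : Finset ι} {q : ι} (he : IsChain (· ≤ ·) (e : Set ι))
    (hlt : ∀ y ∈ e, y < q) : IsChain (· ≤ ·) ((insert q e : Finset ι) : Set ι) := by
  rw [coe_insert]
  exact he.insert fun y hy _ => Or.inr (hlt y hy).le

theorem sum_nonempty_chains {M : Type*} [AddCommMonoid M] (R : Finset ι) (F : Finset ι → M) :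
    ∑ c ∈ chains R with c.Nonempty, F c =
      ∑ q ∈ R, ∑ e ∈ chains {x ∈ R | x < q}, F (insert q e) := by
  rw [sum_sigma']
  symm
  refine sum_bij (fun x _ => insert x.1 x.2) ?_ ?_ ?_ (fun _ _ => rfl)
  · rintro ⟨q, e⟩ hx
    rw [mem_sigma, mem_chains_filter_lt, mem_chains] at hx
    obtain ⟨hq, ⟨hsub, he⟩, hlt⟩ := hx
    exact mem_filter.2 ⟨mem_chains.2 ⟨insert_subset hq hsub, he.insert_of_forall_lt hlt⟩,
      insert_nonempty _ _⟩
  · rintro ⟨q, e⟩ hx ⟨q', e'⟩ hx' h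
    rw [mem_sigma, mem_chains_filter_lt] at hx hx'
    obtain ⟨-, -, hlt⟩ := hx
    obtain ⟨-, -, hlt'⟩ := hx'
    dsimp only at hlt hlt' h
    have hqq' : q = q' := by
      rcases mem_insert.1 (h ▸ mem_insert_self q e) with h1 | h1
      · exact h1
      rcases mem_insert.1 (h ▸ mem_insert_self q' e') with h2 | h2
      · exact h2.symm
      exact absurd ((hlt' q h1).trans (hlt q' h2)) (lt_irrefl q)
    subst hqq'
    have hee' : e = e' := by
      rw [← erase_insert (fun h => lt_irrefl q (hlt q h)), h,
        erase_insert (fun h => lt_irrefl q (hlt' q h))]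
    rw [hee']
  · intro c hc
    obtain ⟨hc, hne⟩ := mem_filter.1 hc
    obtain ⟨hcR, hc⟩ := mem_chains.1 hc
    obtain ⟨z, hz, hlt⟩ := hc.exists_forall_erase_lt hne
    refine ⟨⟨z, c.erase z⟩, ?_, insert_erase hz⟩
    rw [mem_sigma, mem_chains_filter_lt, mem_chains]
    exact ⟨hcR hz, ⟨(erase_subset _ _).trans hcR, hc.mono (by simp)⟩, hlt⟩

theorem signedChainCount_eq_one_sub_sum (R : Finset ι) :
    signedChainCount R = 1 - ∑ q ∈ R, signedChainCount {x ∈ R | x < q} := by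
  have hempty : {e ∈ chains R | ¬ e.Nonempty} = {∅} := by
    ext e
    simp only [mem_filter, mem_chains, not_nonempty_iff_eq_empty, mem_singleton]
    constructor
    · exact fun h => h.2
    · rintro rfl
      simp
  rw [signedChainCount, ← sum_filter_add_sum_filter_not _ Finset.Nonempty, sum_nonempty_chains,
    hempty, sum_singleton, card_empty, pow_zero, add_comm, sub_eq_add_neg, ← sum_neg_distrib]
  congr 1
  refine sum_congr rfl fun q _ => ?_
  rw [signedChainCount, ← sum_neg_distrib]
  refine sum_congr rfl fun e he => ?_
  have hq : q ∉ e := fun h => lt_irrefl q ((mem_chains_filter_lt.1 he).2 q h)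
  rw [card_insert_of_notMem hq, pow_succ, mul_neg_one]

/-- The hypothesis is the recursion defining `-μ(0̂, ·)` on `R` with a bottom `0̂` adjoined, so this
is Philip Hall's theorem expressing the Möbius function through chains. -/
theorem signedChainCount_filter_lt_eq {R : Finset ι} {φ : ι → ℤ}
    (hφ : ∀ z ∈ R, φ z + ∑ w ∈ R with w < z, φ w = 1) {z : ι} (hz : z ∈ R) :
    signedChainCount {w ∈ R | w < z} = φ z := by
  induction h : #{w ∈ R | w < z} using Nat.strong_induction_on generalizing z with
  | _ n ih =>
    have hbelow : ∀ w ∈ {w ∈ R | w < z}, {x ∈ {w ∈ R | w < z} | x < w} = {x ∈ R | x < w} :=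
      fun w hw => filter_lt_filter_lt_of_lt (mem_filter.1 hw).2
    have hsum : ∑ w ∈ {w ∈ R | w < z}, signedChainCount {x ∈ {w ∈ R | w < z} | x < w} =
        ∑ w ∈ R with w < z, φ w := by
      refine sum_congr rfl fun w hw => ?_
      have hcard : #{x ∈ R | x < w} < n := by
        rw [← h, ← hbelow w hw]
        exact card_lt_card (filter_ssubset.2 ⟨w, hw, lt_irrefl w⟩)
      rw [hbelow w hw]
      exact ih _ hcard (mem_filter.1 hw).1 rfl
    rw [signedChainCount_eq_one_sub_sum, hsum]
    linarith [hφ z hz]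

theorem signedChainCount_union_of_forall_lt {R S : Finset ι} (h : ∀ x ∈ R, ∀ y ∈ S, x < y) :
    signedChainCount (R ∪ S) = signedChainCount R * signedChainCount S := by
  have hdisj : Disjoint R S := disjoint_left.2 fun x hx hx' => lt_irrefl x (h x hx x hx')
  rw [signedChainCount, signedChainCount, signedChainCount, sum_mul_sum, ← sum_product']
  refine sum_nbij' (fun e => (e ∩ R, e ∩ S)) (fun p => p.1 ∪ p.2) ?_ ?_ ?_ ?_ ?_
  · intro e he
    have he := (mem_chains.1 he).2
    simp only [mem_product, mem_chains]
    exact ⟨⟨inter_subset_right, he.mono (by simp)⟩, inter_subset_right, he.mono (by simp)⟩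
  · rintro ⟨e₁, e₂⟩ he
    simp only [mem_product, mem_chains] at he
    obtain ⟨⟨h₁, c₁⟩, h₂, c₂⟩ := he
    simp only [mem_chains, coe_union]
    exact ⟨union_subset_union h₁ h₂, isChain_union.2 ⟨c₁, c₂, fun a ha b hb _ =>
      Or.inl (h a (h₁ ha) b (h₂ hb)).le⟩⟩
  · intro e he
    simp only [← inter_union_distrib_left, inter_eq_left.2 (mem_chains.1 he).1]
  · rintro ⟨e₁, e₂⟩ he
    simp only [mem_product, mem_chains] at he
    have h₁ := he.1.1
    have h₂ := he.2.1
    ext x <;> simp only [mem_inter, mem_union] <;> grind [disjoint_left]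
  · intro e he
    rw [← pow_add, ← card_union_of_disjoint (hdisj.mono inter_subset_right inter_subset_right),
      ← inter_union_distrib_left, inter_eq_left.2 (mem_chains.1 he).1]

theorem sum_chains_superset {R c : Finset ι} (hc : c ∈ chains R) :
    ∑ d ∈ chains R with c ⊆ d, (-1 : ℤ) ^ #d = (-1) ^ #c * signedChainCount (orderLink R c) := by
  obtain ⟨hcR, hc⟩ := mem_chains.1 hc
  rw [signedChainCount, mul_sum]
  refine sum_nbij' (· \ c) (c ∪ ·) ?_ ?_ ?_ ?_ ?_
  · intro d hd
    obtain ⟨hd, hcd⟩ := mem_filter.1 hd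
    obtain ⟨hdR, hd⟩ := mem_chains.1 hd
    refine mem_chains.2 ⟨fun x hx => ?_, hd.mono (by simp)⟩
    obtain ⟨hxd, hxc⟩ := mem_sdiff.1 hx
    exact mem_filter.2 ⟨hdR hxd, hxc, fun y hy => hd.total hxd (hcd hy)⟩
  · intro e he
    obtain ⟨heL, he⟩ := mem_chains.1 he
    refine mem_filter.2 ⟨mem_chains.2 ⟨union_subset hcR (heL.trans (filter_subset _ _)), ?_⟩,
      subset_union_left⟩
    rw [coe_union]
    exact isChain_union.2 ⟨hc, he, fun a ha b hb _ => ((mem_filter.1 (heL hb)).2.2 a ha).symm⟩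
  · intro d hd
    exact union_sdiff_of_subset (mem_filter.1 hd).2
  · intro e he
    refine union_sdiff_cancel_left (disjoint_right.2 fun x hx => ?_)
    exact (mem_filter.1 ((mem_chains.1 he).1 hx)).2.1
  · intro d hd
    rw [← pow_add, add_comm, card_sdiff_add_card_eq_card (mem_filter.1 hd).2]

@[simp]
theorem orderLink_empty (R : Finset ι) : orderLink R ∅ = R := by
  simp [orderLink]

theorem orderLink_insert {R e : Finset ι} {q : ι} (hlt : ∀ y ∈ e, y < q) :
    orderLink R (insert q e) = orderLink {x ∈ R | x < q} e ∪ {x ∈ R | q < x} := by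
  ext x
  simp only [orderLink, mem_union, mem_filter, mem_insert, forall_eq_or_imp]
  constructor
  · rintro ⟨hxR, hx, hxq, hxe⟩
    rcases hxq with hxq | hqx
    · exact Or.inl ⟨⟨hxR, lt_of_le_of_ne hxq (not_or.1 hx).1⟩, (not_or.1 hx).2, hxe⟩
    · exact Or.inr ⟨hxR, lt_of_le_of_ne hqx (Ne.symm (not_or.1 hx).1)⟩
  · rintro (⟨⟨hxR, hxq⟩, hxe, hcmp⟩ | ⟨hxR, hqx⟩)
    · exact ⟨hxR, not_or.2 ⟨hxq.ne, hxe⟩, Or.inl hxq.le, hcmp⟩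
    · refine ⟨hxR, not_or.2 ⟨hqx.ne', fun hx => lt_asymm hqx (hlt x hx)⟩, Or.inr hqx.le,
        fun y hy => Or.inr ((hlt y hy).trans hqx).le⟩

theorem signedChainCount_orderLink_insert {R e : Finset ι} {q : ι} (hlt : ∀ y ∈ e, y < q) :
    signedChainCount (orderLink R (insert q e)) =
      signedChainCount (orderLink {x ∈ R | x < q} e) * signedChainCount {x ∈ R | q < x} := by
  rw [orderLink_insert hlt]
  refine signedChainCount_union_of_forall_lt fun x hx y hy => ?_
  exact (mem_filter.1 (mem_filter.1 hx).1).2.trans (mem_filter.1 hy).2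

end ChainSum

section BooleanProduct

open Classical

theorem sum_Icc_neg_one_pow_card_of_ssubset {s t : Finset α} (h : s ⊂ t) :
    ∑ u ∈ Icc s t, (-1 : ℤ) ^ #u = 0 := by
  have hdisj : ∀ x ∈ (t \ s).powerset, Disjoint s x := fun x hx =>
    disjoint_of_subset_right (mem_powerset.1 hx) disjoint_sdiff
  rw [Icc_eq_image_powerset h.subset, sum_image fun x hx y hy hxy => by
    rw [← union_sdiff_cancel_left (hdisj x hx), hxy, union_sdiff_cancel_left (hdisj y hy)]]
  rw [sum_congr rfl fun x hx => by rw [card_union_of_disjoint (hdisj x hx), pow_add], ← mul_sum,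
    sum_powerset_neg_one_pow_card_of_nonempty (sdiff_nonempty.2 h.not_subset), mul_zero]

variable {σ τ : Type*}

def pairSign (z : Finset σ × Finset τ) : ℤ := (-1) ^ #z.1 * (-1) ^ #z.2

theorem pairSign_mul_self (z : Finset σ × Finset τ) : pairSign z * pairSign z = 1 := by
  rw [pairSign, mul_mul_mul_comm, ← mul_pow, ← mul_pow]
  norm_num

theorem sum_pairSign_product (s : Finset (Finset σ)) (t : Finset (Finset τ)) :
    ∑ z ∈ s ×ˢ t, pairSign z = (∑ x ∈ s, (-1 : ℤ) ^ #x) * ∑ y ∈ t, (-1 : ℤ) ^ #y := by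
  rw [sum_product, sum_mul_sum]
  rfl

theorem IsComplex.mem_product_of_le {G : Finset (Finset σ)} {H : Finset (Finset τ)}
    (hG : IsComplex G) (hH : IsComplex H) {z w : Finset σ × Finset τ} (hz : z ∈ G ×ˢ H)
    (hwz : w ≤ z) (h₁ : w.1.Nonempty) (h₂ : w.2.Nonempty) : w ∈ G ×ˢ H :=
  mem_product.2 ⟨hG.2 _ (mem_product.1 hz).1 _ hwz.1 h₁, hH.2 _ (mem_product.1 hz).2 _ hwz.2 h₂⟩

variable [DecidableEq σ] [DecidableEq τ]

theorem sum_Icc_pairSign_of_lt {p q : Finset σ × Finset τ} (h : p < q) :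
    ∑ z ∈ Icc p q, pairSign z = 0 := by
  rw [Icc_prod_def, sum_pairSign_product]
  rcases Prod.lt_iff.1 h with ⟨h₁, -⟩ | ⟨-, h₂⟩
  · rw [sum_Icc_neg_one_pow_card_of_ssubset h₁, zero_mul]
  · rw [sum_Icc_neg_one_pow_card_of_ssubset h₂, mul_zero]

theorem signedChainCount_Ioo {p q : Finset σ × Finset τ} (h : p < q) :
    signedChainCount (Ioo p q) = -(pairSign p * pairSign q) := by
  have hIoo : ∀ z ∈ Ioc p q, {w ∈ Ioc p q | w < z} = Ioo p z := fun z hz => by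
    ext w
    simp only [mem_filter, mem_Ioc, mem_Ioo]
    exact ⟨fun h => ⟨h.1.1, h.2⟩, fun h => ⟨⟨h.1, h.2.le.trans (mem_Ioc.1 hz).2⟩, h.2⟩⟩
  rw [← hIoo q (right_mem_Ioc.2 h)]
  refine signedChainCount_filter_lt_eq (φ := fun z => -(pairSign p * pairSign z))
    (fun z hz => ?_) (right_mem_Ioc.2 h)
  have hpz := (mem_Ioc.1 hz).1
  have hIcc := sum_Icc_pairSign_of_lt hpz
  rw [Icc_eq_cons_Ico hpz.le, sum_cons, Ico_eq_cons_Ioo hpz, sum_cons] at hIcc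
  rw [hIoo z hz, sum_neg_distrib, ← mul_sum]
  linear_combination (-pairSign p) * hIcc + pairSign_mul_self p

theorem IsComplex.Ioo_subset_product {G : Finset (Finset σ)} {H : Finset (Finset τ)}
    (hG : IsComplex G) (hH : IsComplex H) {p q : Finset σ × Finset τ} (hp : p ∈ G ×ˢ H)
    (hq : q ∈ G ×ˢ H) : Ioo p q ⊆ G ×ˢ H := fun _ hx =>
  have hpx := (mem_Ioo.1 hx).1.le
  hG.mem_product_of_le hH hq (mem_Ioo.1 hx).2.le ((hG.1 _ (mem_product.1 hp).1).mono hpx.1)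
    ((hH.1 _ (mem_product.1 hp).2).mono hpx.2)

theorem signedChainCount_product_filter_lt {G : Finset (Finset σ)} {H : Finset (Finset τ)}
    (hG : IsComplex G) (hH : IsComplex H) {q : Finset σ × Finset τ} (hq : q ∈ G ×ˢ H) :
    signedChainCount {x ∈ G ×ˢ H | x < q} = pairSign q := by
  refine signedChainCount_filter_lt_eq (fun z hz => ?_) hq
  have hz₁ := hG.1 _ (mem_product.1 hz).1
  have hz₂ := hH.1 _ (mem_product.1 hz).2
  have hbelow : {w ∈ G ×ˢ H | w < z} =
      ({x ∈ z.1.powerset | x.Nonempty} ×ˢ {y ∈ z.2.powerset | y.Nonempty}).erase z := by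
    ext w
    simp only [mem_erase, mem_filter, mem_product, mem_powerset]
    constructor
    · rintro ⟨⟨hw₁, hw₂⟩, hwz⟩
      exact ⟨hwz.ne, ⟨hwz.le.1, hG.1 _ hw₁⟩, hwz.le.2, hH.1 _ hw₂⟩
    · rintro ⟨hwz, ⟨hw₁, n₁⟩, hw₂, n₂⟩
      exact ⟨mem_product.1 (hG.mem_product_of_le hH hz ⟨hw₁, hw₂⟩ n₁ n₂),
        lt_of_le_of_ne ⟨hw₁, hw₂⟩ hwz⟩
  have hzmem : z ∈ {x ∈ z.1.powerset | x.Nonempty} ×ˢ {y ∈ z.2.powerset | y.Nonempty} := by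
    simp [hz₁, hz₂]
  rw [hbelow, add_sum_erase _ _ hzmem, sum_pairSign_product,
    sum_powerset_filter_nonempty_neg_one_pow_card hz₁,
    sum_powerset_filter_nonempty_neg_one_pow_card hz₂]
  norm_num

theorem signedChainCount_product_filter_gt {G : Finset (Finset σ)} {H : Finset (Finset τ)}
    (hG : IsComplex G) (hH : IsComplex H) {q : Finset σ × Finset τ} (hq : q ∈ G ×ˢ H) :
    signedChainCount {x ∈ G ×ˢ H | q < x} =
      pairSign q * ∑ z ∈ starC G q.1 ×ˢ starC H q.2, pairSign z := by
  have habove : (starC G q.1 ×ˢ starC H q.2).erase q = {x ∈ G ×ˢ H | q < x} := by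
    ext x
    simp only [starC, mem_erase, mem_filter, mem_product, lt_iff_le_and_ne]
    exact ⟨fun ⟨hxq, ⟨h₁, l₁⟩, h₂, l₂⟩ => ⟨⟨h₁, h₂⟩, ⟨l₁, l₂⟩, Ne.symm hxq⟩,
      fun ⟨⟨h₁, h₂⟩, ⟨l₁, l₂⟩, hqx⟩ => ⟨Ne.symm hqx, ⟨h₁, l₁⟩, h₂, l₂⟩⟩
  have hqmem : q ∈ starC G q.1 ×ˢ starC H q.2 := by
    simp only [starC, mem_product, mem_filter, subset_refl, and_true]
    exact mem_product.1 hq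
  have hIoo : ∀ z ∈ {x ∈ G ×ˢ H | q < x}, {x ∈ {x ∈ G ×ˢ H | q < x} | x < z} = Ioo q z := by
    intro z hz
    rw [filter_filter, filter_congr fun x _ => by rw [← mem_Ioo], filter_mem_eq_inter,
      inter_eq_right.2 (hG.Ioo_subset_product hH hq (mem_filter.1 hz).1)]
  rw [signedChainCount_eq_one_sub_sum, ← add_sum_erase _ _ hqmem, habove, mul_add,
    pairSign_mul_self, mul_sum, sub_eq_add_neg, ← sum_neg_distrib]
  refine congrArg _ (sum_congr rfl fun z hz => ?_)
  rw [hIoo z hz, signedChainCount_Ioo (mem_filter.1 hz).2, neg_neg]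

theorem signedChainCount_orderLink_product_filter_lt {G : Finset (Finset σ)}
    {H : Finset (Finset τ)} (hG : IsComplex G) (hH : IsComplex H) {q : Finset σ × Finset τ}
    (hq : q ∈ G ×ˢ H) {e : Finset (Finset σ × Finset τ)}
    (he : e ∈ chains {x ∈ G ×ˢ H | x < q}) :
    signedChainCount (orderLink {x ∈ G ×ˢ H | x < q} e) = pairSign q * (-1) ^ #e := by
  refine IsChain.finset_induction_on_max (p := fun e => ∀ q ∈ G ×ˢ H,
      e ∈ chains {x ∈ G ×ˢ H | x < q} →
      signedChainCount (orderLink {x ∈ G ×ˢ H | x < q} e) = pairSign q * (-1) ^ #e)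
    e (mem_chains.1 he).2 ?_ ?_ q hq he
  · intro q hq _
    rw [orderLink_empty, signedChainCount_product_filter_lt hG hH hq, card_empty, pow_zero, mul_one]
  · intro a s hs hlt ih q hq hmem
    obtain ⟨hmem, hltq⟩ := mem_chains_filter_lt.1 hmem
    have ha : a ∈ G ×ˢ H := (mem_chains.1 hmem).1 (mem_insert_self a s)
    have haq : a < q := hltq a (mem_insert_self a s)
    have hs' : s ∈ chains {x ∈ G ×ˢ H | x < a} := mem_chains_filter_lt.2
      ⟨mem_chains.2 ⟨(subset_insert a s).trans (mem_chains.1 hmem).1, hs⟩, hlt⟩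
    have habove : {x ∈ {x ∈ G ×ˢ H | x < q} | a < x} = Ioo a q := by
      rw [filter_filter, filter_congr fun x _ => by rw [and_comm, ← mem_Ioo], filter_mem_eq_inter,
        inter_eq_right.2 (hG.Ioo_subset_product hH ha hq)]
    rw [signedChainCount_orderLink_insert hlt, filter_lt_filter_lt_of_lt haq, habove, ih a ha hs',
      signedChainCount_Ioo haq, card_insert_of_notMem fun h => lt_irrefl a (hlt a h), pow_succ]
    linear_combination (-(-1 : ℤ) ^ #s * pairSign q) * pairSign_mul_self a

end BooleanProduct

section ProductComplex

open Classical

theorem prodComplex_eq (G H : Finset (Finset ℕ)) :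
    prodComplex G H = {c ∈ chains (G ×ˢ H) | c.Nonempty} := by
  ext c
  simp only [prodComplex, mem_filter, mem_powerset, mem_chains]
  constructor
  · rintro ⟨hc, hne, hcmp⟩
    exact ⟨⟨hc, fun p hp q hq _ => hcmp p hp q hq⟩, hne⟩
  · rintro ⟨⟨hc, hch⟩, hne⟩
    exact ⟨hc, hne, fun p hp q hq => hch.total hp hq⟩

theorem prodComplex_isComplex (G H : Finset (Finset ℕ)) : IsComplex (prodComplex G H) := by
  rw [prodComplex_eq]
  refine ⟨fun c hc => (mem_filter.1 hc).2, fun c hc d hdc hd => ?_⟩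
  obtain ⟨hcR, hc⟩ := mem_chains.1 (mem_filter.1 hc).1
  exact mem_filter.2 ⟨mem_chains.2 ⟨hdc.trans hcR, hc.mono (by simpa using hdc)⟩, hd⟩

theorem eulerChar_starC_prodComplex {G H : Finset (Finset ℕ)} (hG : IsComplex G)
    (hH : IsComplex H) {q : Finset ℕ × Finset ℕ} (hq : q ∈ G ×ˢ H)
    {e : Finset (Finset ℕ × Finset ℕ)} (he : e ∈ chains {x ∈ G ×ˢ H | x < q}) :
    eulerChar (starC (prodComplex G H) (insert q e)) =
      eulerChar (starC G q.1) * eulerChar (starC H q.2) := by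
  obtain ⟨he', hlt⟩ := mem_chains_filter_lt.1 he
  have hc : insert q e ∈ chains (G ×ˢ H) := mem_chains.2
    ⟨insert_subset hq (mem_chains.1 he').1, (mem_chains.1 he').2.insert_of_forall_lt hlt⟩
  have hstar : starC (prodComplex G H) (insert q e) = {d ∈ chains (G ×ˢ H) | insert q e ⊆ d} := by
    ext d
    simp only [starC, prodComplex_eq, mem_filter]
    exact ⟨fun h => ⟨h.1.1, h.2⟩, fun h => ⟨⟨h.1, (insert_nonempty q e).mono h.2⟩, h.2⟩⟩
  rw [(prodComplex_isComplex G H).eulerChar_starC_eq_neg_sum, hG.eulerChar_starC_eq_neg_sum,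
    hH.eulerChar_starC_eq_neg_sum, hstar, sum_chains_superset hc,
    signedChainCount_orderLink_insert hlt, signedChainCount_orderLink_product_filter_lt hG hH hq he,
    signedChainCount_product_filter_gt hG hH hq, sum_pairSign_product,
    card_insert_of_notMem fun h => lt_irrefl q (hlt q h), pow_succ]
  generalize ∑ x ∈ starC G q.1, (-1 : ℤ) ^ #x = S₁
  generalize ∑ y ∈ starC H q.2, (-1 : ℤ) ^ #y = S₂
  have hsq : (-1 : ℤ) ^ #e * (-1) ^ #e = 1 := by rw [← mul_pow]; norm_num
  linear_combination ((-1) ^ #e * (-1) ^ #e * S₁ * S₂) * pairSign_mul_self q + S₁ * S₂ * hsq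

theorem sum_prodComplex_eq_sum_pairSign_mul {G H : Finset (Finset ℕ)} (hG : IsComplex G)
    (hH : IsComplex H) (F : Finset (Finset ℕ × Finset ℕ) → ℤ) (f : Finset ℕ × Finset ℕ → ℤ)
    (hF : ∀ q ∈ G ×ˢ H, ∀ e ∈ chains {x ∈ G ×ˢ H | x < q}, F (insert q e) = f q) :
    ∑ c ∈ prodComplex G H, (-1) ^ (#c - 1) * F c = ∑ q ∈ G ×ˢ H, pairSign q * f q := by
  rw [prodComplex_eq, sum_nonempty_chains]
  refine sum_congr rfl fun q hq => ?_
  rw [← signedChainCount_product_filter_lt hG hH hq, signedChainCount, sum_mul]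
  refine sum_congr rfl fun e he => ?_
  rw [hF q hq e he, card_insert_of_notMem fun h => lt_irrefl q ((mem_chains_filter_lt.1 he).2 q h),
    Nat.add_sub_cancel]

end ProductComplex

/-- Product formula: `w_m(G · H) = w_m(G) · w_m(H)`. -/
theorem product_formula (G H : Finset (Finset ℕ))
    (hG : IsComplex G) (hH : IsComplex H) (m : ℕ) (hm : 1 ≤ m) :
    wm m (prodComplex G H) = wm m G * wm m H := by
  rw [wm_eq_sum_eulerChar_starC (prodComplex_isComplex G H) hm, wm_eq_sum_eulerChar_starC hG hm,
    wm_eq_sum_eulerChar_starC hH hm,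
    sum_prodComplex_eq_sum_pairSign_mul hG hH _
      (fun q => (eulerChar (starC G q.1) * eulerChar (starC H q.2)) ^ m)
      fun q hq e he => by rw [eulerChar_starC_prodComplex hG hH hq he],
    sum_product, sum_mul_sum]
  refine sum_congr rfl fun a ha => sum_congr rfl fun b hb => ?_
  rw [pairSign, neg_one_pow_card_sub_one (hG.1 a ha), neg_one_pow_card_sub_one (hH.1 b hb)]
  ring
end
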